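/- arXiv:math/0611907 — 4 statements merged into one kernel-verified Lean document; each statement's English description precedes it below -/
import Mathlib

section
/- Let α > 1, k ≥ 1 an integer, β = 1/(α-1), and φ'(r) = [((1-r^(k+1))^(-β) - 1)/r]^(1/k) on (0,1). Then φ''(r) > 0 for all r ∈ (0,1), i.e. φ' is strictly increasing on (0,1). -/
/-! Write `φ' = ψ ^ (1 / k)` with `ψ r = h r / r > 0`, `h r = (1 - r ^ (k + 1)) ^ (-β) - 1`;
it suffices that `r ^ 2 ψ' r = r h' r - h r > 0`. With `s = 1 - r ^ (k + 1)`, multiplying this by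
`s ^ (β + 1)` gives `β (k + 1) (1 - s) - s + s ^ (β + 1)`, and Bernoulli's inequality
`s ^ (β + 1) ≥ 1 + (β + 1) (s - 1)` bounds that below by `β k (1 - s) > 0`. -/

open Real Set

lemma mul_one_sub_sub_add_rpow_succ_pos {β c s : ℝ} (hβ : 0 ≤ β) (hc : β < c)
    (hs₀ : 0 < s) (hs₁ : s < 1) :
    0 < c * (1 - s) - s + s ^ (β + 1) := by
  have bernoulli : 1 + (β + 1) * (s - 1) ≤ s ^ (β + 1) := by
    simpa using one_add_mul_self_le_rpow_one_add (s := s - 1) (by linarith) (p := β + 1)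
      (by linarith)
  nlinarith

lemma mul_mul_rpow_sub_rpow_add_one_pos {β c t : ℝ} (hβ : 0 ≤ β) (hc : β < c)
    (ht₀ : 0 < t) (ht₁ : t < 1) :
    0 < c * t * (1 - t) ^ (-β - 1) - (1 - t) ^ (-β) + 1 := by
  have hs : 0 < 1 - t := by linarith
  have key : (c * t * (1 - t) ^ (-β - 1) - (1 - t) ^ (-β) + 1) * (1 - t) ^ (β + 1) =
      c * (1 - (1 - t)) - (1 - t) + (1 - t) ^ (β + 1) := by
    have e₁ : (1 - t) ^ (-β - 1) * (1 - t) ^ (β + 1) = 1 := by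
      rw [← rpow_add hs]; norm_num
    have e₂ : (1 - t) ^ (-β) * (1 - t) ^ (β + 1) = 1 - t := by
      rw [← rpow_add hs]; norm_num
    linear_combination c * t * e₁ - e₂
  have := mul_one_sub_sub_add_rpow_succ_pos hβ hc hs (by linarith)
  rw [← key] at this
  exact pos_of_mul_pos_left this (rpow_pos_of_pos hs _).le

lemma hasDerivAt_one_sub_pow_rpow_neg (β : ℝ) (m : ℕ) {r : ℝ} (hr : r ^ m ≠ 1) :
    HasDerivAt (fun x : ℝ => (1 - x ^ m) ^ (-β))
      (β * m * r ^ (m - 1) * (1 - r ^ m) ^ (-β - 1)) r := by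
  convert ((hasDerivAt_pow m r).const_sub 1).rpow_const (p := -β) (Or.inl (sub_ne_zero.2 hr.symm))
    using 1
  ring

lemma exists_hasDerivAt_one_sub_pow_rpow_neg_sub_one_div_pos {β : ℝ} {m : ℕ} (hβ : 0 < β)
    (hm : 1 < m) {r : ℝ} (hr₀ : 0 < r) (hr₁ : r < 1) :
    ∃ d, 0 < d ∧ HasDerivAt (fun x : ℝ => ((1 - x ^ m) ^ (-β) - 1) / x) d r := by
  have ht₀ : 0 < r ^ m := pow_pos hr₀ m
  have ht₁ : r ^ m < 1 := pow_lt_one₀ hr₀.le hr₁ (by omega)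
  have hderiv := ((hasDerivAt_one_sub_pow_rpow_neg β m ht₁.ne).sub_const 1).div
    (hasDerivAt_id r) hr₀.ne'
  refine ⟨_, div_pos ?_ (by simp [hr₀]), hderiv⟩
  have hpow : r ^ (m - 1) * r = r ^ m := by rw [← pow_succ, Nat.sub_add_cancel hm.le]
  have hc : β < β * m := lt_mul_right hβ (by exact_mod_cast hm)
  refine (mul_mul_rpow_sub_rpow_add_one_pos hβ.le hc ht₀ ht₁).trans_eq ?_
  rw [id_eq, ← hpow]
  ring

lemma one_sub_pow_rpow_neg_sub_one_div_pos {β : ℝ} {m : ℕ} (hβ : 0 < β) (hm : m ≠ 0) {r : ℝ}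
    (hr₀ : 0 < r) (hr₁ : r < 1) : 0 < ((1 - r ^ m) ^ (-β) - 1) / r := by
  have ht₁ : r ^ m < 1 := pow_lt_one₀ hr₀.le hr₁ hm
  have : 1 < (1 - r ^ m) ^ (-β) :=
    one_lt_rpow_of_pos_of_lt_one_of_neg (by linarith) (by linarith [pow_pos hr₀ m]) (by linarith)
  exact div_pos (by linarith) hr₀

lemma HasDerivAt.exists_rpow_const_pos {f : ℝ → ℝ} {f' x p : ℝ} (hf : HasDerivAt f f' x)
    (hf' : 0 < f') (hfx : 0 < f x) (hp : 0 < p) :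
    ∃ d, 0 < d ∧ HasDerivAt (fun y => f y ^ p) d x :=
  ⟨_, by have := rpow_pos_of_pos hfx (p - 1); positivity, hf.rpow_const (Or.inl hfx.ne')⟩

theorem stmt_6 (α : ℝ) (k : ℕ) (hα : 1 < α) (hk : 1 ≤ k)
    (β : ℝ) (hβ : β = 1 / (α - 1))
    (φd : ℝ → ℝ)
    (hφd : ∀ r, φd r = (((1 - r ^ (k + 1)) ^ (-β) - 1) / r) ^ ((1 : ℝ) / k)) :
    (∀ r ∈ Set.Ioo (0 : ℝ) 1, 0 < deriv φd r) ∧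
      StrictMonoOn φd (Set.Ioo (0 : ℝ) 1) := by
  have hβ₀ : 0 < β := by rw [hβ]; exact one_div_pos.2 (by linarith)
  have hφd' : ∀ r ∈ Ioo (0 : ℝ) 1, ∃ d, 0 < d ∧ HasDerivAt φd d r := by
    rintro r ⟨hr₀, hr₁⟩
    obtain ⟨d, hd, hψ⟩ :=
      exists_hasDerivAt_one_sub_pow_rpow_neg_sub_one_div_pos hβ₀ (by omega : 1 < k + 1) hr₀ hr₁
    rw [funext hφd]
    exact hψ.exists_rpow_const_pos hd
      (one_sub_pow_rpow_neg_sub_one_div_pos hβ₀ k.succ_ne_zero hr₀ hr₁) (by positivity)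
  have hderiv_pos : ∀ r ∈ Ioo (0 : ℝ) 1, 0 < deriv φd r := fun r hr => by
    obtain ⟨d, hd, h⟩ := hφd' r hr
    rwa [h.deriv]
  refine ⟨hderiv_pos, strictMonoOn_of_deriv_pos (convex_Ioo 0 1) (fun r hr => ?_)
    (by simpa using hderiv_pos)⟩
  obtain ⟨d, -, h⟩ := hφd' r hr
  exact h.continuousAt.continuousWithinAt
end

section
/- Let n ≥ 2, 1 ≤ k ≤ n-1 be integers and A_k > 0, η₀ > 0 constants. Suppose φ: [0,T) → ℝ is C¹ with φ(0) = 0 and φ'(r) ≥ r·(A_k⁻¹·e^(φ(r))·η₀)^(1/k) for all r ∈ [0,T). Then T ≤ (2k·(A_k/η₀)^(1/k))^(1/2); i.e., the maximal existence interval is finite (blow-up in finite 'time'). -/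
/-!
Put `c = (η₀ / A_k)^(1/k)`, so the hypothesis reads `φ' ≥ c r e^(φ/k)`. Then
`F r = -k e^(-φ r / k) - c r² / 2` is nondecreasing, and `F 0 = -k` gives
`c ρ² / 2 ≤ k (1 - e^(-φ ρ / k)) < k` on the whole interval of existence.
-/

open Real Set

theorem hasDerivAt_neg_mul_exp_neg_div {φ : ℝ → ℝ} {φ' k x : ℝ} (hk : k ≠ 0)
    (h : HasDerivAt φ φ' x) :
    HasDerivAt (fun s => -k * exp (-φ s / k)) (exp (-φ x / k) * φ') x := by
  refine ((h.neg.div_const k).exp.const_mul (-k)).congr_deriv ?_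
  rw [Pi.neg_apply]
  field_simp

theorem sq_lt_of_deriv_ge_mul_exp {k c T : ℝ} {φ φd : ℝ → ℝ} (hk : 0 < k) (hc : 0 < c)
    (hφ0 : φ 0 = 0) (hderiv : ∀ r ∈ Ico 0 T, HasDerivAt φ (φd r) r)
    (hge : ∀ r ∈ Ico 0 T, c * r * exp (φ r / k) ≤ φd r) {ρ : ℝ} (hρ : ρ ∈ Ico 0 T) :
    ρ ^ 2 < 2 * k / c := by
  set F : ℝ → ℝ := fun r => -k * exp (-φ r / k) - c * r ^ 2 / 2
  have hF : ∀ r ∈ Ico 0 T, HasDerivAt F (exp (-φ r / k) * φd r - c * r) r := fun r hr => by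
    refine ((hasDerivAt_neg_mul_exp_neg_div hk.ne' (hderiv r hr)).sub
      (((hasDerivAt_pow 2 r).const_mul c).div_const 2)).congr_deriv ?_
    norm_num
    ring
  have hF_nonneg : ∀ r ∈ Ico 0 T, 0 ≤ exp (-φ r / k) * φd r - c * r := fun r hr => by
    have hcancel : exp (-φ r / k) * (c * r * exp (φ r / k)) = c * r := by
      rw [mul_left_comm, ← exp_add, neg_div, neg_add_cancel, exp_zero, mul_one]
    linarith [mul_le_mul_of_nonneg_left (hge r hr) (exp_pos (-φ r / k)).le]
  have hmono : MonotoneOn F (Ico 0 T) :=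
    monotoneOn_of_hasDerivWithinAt_nonneg (convex_Ico 0 T)
      (fun r hr => (hF r hr).continuousAt.continuousWithinAt)
      (fun r hr => (hF r (interior_subset hr)).hasDerivWithinAt)
      (fun r hr => hF_nonneg r (interior_subset hr))
  have h0 : F 0 ≤ F ρ := hmono ⟨le_rfl, hρ.1.trans_lt hρ.2⟩ hρ hρ.1
  norm_num [F, hφ0] at h0
  rw [lt_div_iff₀ hc]
  nlinarith [exp_pos (-φ ρ / k)]

theorem le_sqrt_of_forall_mem_Ico_sq_lt {T a : ℝ} (h : ∀ ρ ∈ Ico 0 T, ρ ^ 2 < a) :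
    T ≤ √a := by
  by_contra! hT
  have ha := h √a ⟨sqrt_nonneg a, hT⟩
  rw [sq_sqrt ((sq_nonneg _).trans ha.le)] at ha
  exact lt_irrefl a ha

theorem stmt_7_general (k : ℕ) (hk1 : 1 ≤ k)
    (Ak η₀ : ℝ) (hAk : 0 < Ak) (hη₀ : 0 < η₀)
    (T : ℝ) (φ φd : ℝ → ℝ) (hφ0 : φ 0 = 0)
    (hderiv : ∀ r ∈ Set.Ico (0 : ℝ) T, HasDerivAt φ (φd r) r)
    (hge : ∀ r ∈ Set.Ico (0 : ℝ) T,
      r * (Ak⁻¹ * Real.exp (φ r) * η₀) ^ ((1 : ℝ) / k) ≤ φd r) :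
    T ≤ Real.sqrt (2 * k * (Ak / η₀) ^ ((1 : ℝ) / k)) := by
  have hk : (0 : ℝ) < k := by exact_mod_cast hk1
  set c := (η₀ / Ak) ^ ((1 : ℝ) / k)
  have hc : 0 < c := by positivity
  have hroot (x : ℝ) : (Ak⁻¹ * exp x * η₀) ^ ((1 : ℝ) / k) = c * exp (x / k) := by
    rw [show Ak⁻¹ * exp x * η₀ = η₀ / Ak * exp x by ring,
      mul_rpow (by positivity) (exp_pos x).le, ← exp_mul, mul_one_div]
  have hbound : 2 * k * (Ak / η₀) ^ ((1 : ℝ) / k) = 2 * k / c := by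
    rw [← inv_div, inv_rpow (by positivity), ← div_eq_mul_inv]
  rw [hbound]
  refine le_sqrt_of_forall_mem_Ico_sq_lt fun ρ hρ =>
    sq_lt_of_deriv_ge_mul_exp hk hc hφ0 hderiv (fun r hr => ?_) hρ
  have h := hge r hr
  rw [hroot] at h
  linarith

theorem stmt_7 (n k : ℕ) (hn : 2 ≤ n) (hk1 : 1 ≤ k) (hkn : k ≤ n - 1)
    (Ak η₀ : ℝ) (hAk : 0 < Ak) (hη₀ : 0 < η₀)
    (T : ℝ) (hT : 0 < T) (φ φd : ℝ → ℝ) (hφ0 : φ 0 = 0)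
    (hderiv : ∀ r ∈ Set.Ico (0 : ℝ) T, HasDerivAt φ (φd r) r)
    (hge : ∀ r ∈ Set.Ico (0 : ℝ) T,
      r * (Ak⁻¹ * Real.exp (φ r) * η₀) ^ ((1 : ℝ) / k) ≤ φd r) :
    T ≤ Real.sqrt (2 * k * (Ak / η₀) ^ ((1 : ℝ) / k)) :=
  stmt_7_general k hk1 Ak η₀ hAk hη₀ T φ φd hφ0 hderiv hge
end

section
/- Let n ≥ 2, 1 ≤ k ≤ n-1, q > k, and define w(x) = (1 - |x|²)^((k+1)/(k-q)) on the open unit ball B₁(0) ⊂ ℝⁿ. Then w is smooth, strictly convex (as a radial function with w' ≥ 0 and w'' > 0 in r = |x|), w → +∞ on the boundary, and there exists a constant B = B(n,k,q) > 0 such that S_k(D²w)(x) ≤ B·(w(x))^q for all x ∈ B₁(0). -/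
set_option maxHeartbeats 1000000 in
open Filter Topology in
/-- The barrier `w(x) = (1-|x|²)^{(k+1)/(k-q)}` on the unit ball, written through its
radial profile `W(r)`: it is smooth, `W' ≥ 0`, `W'' > 0`, blows up at the boundary, and
`S_k(D²w) = A_k[(n-k) r^{-k} (W')^k + k r^{1-k} (W')^{k-1} W''] ≤ B · W^q`. -/
theorem stmt_12 (n k : ℕ) (q : ℝ) (hn : 2 ≤ n) (hk1 : 1 ≤ k) (hkn : k ≤ n - 1)
    (hq : (k : ℝ) < q)
    (W : ℝ → ℝ)
    (hW : W = fun r : ℝ => (1 - r ^ 2) ^ (((k : ℝ) + 1) / ((k : ℝ) - q))) :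
    ContDiffOn ℝ (⊤ : ℕ∞) W (Set.Ico (0 : ℝ) 1) ∧
    (∀ r ∈ Set.Ico (0 : ℝ) 1, 0 ≤ deriv W r) ∧
    (∀ r ∈ Set.Ico (0 : ℝ) 1, 0 < deriv (deriv W) r) ∧
    Tendsto W (𝓝[<] 1) atTop ∧
    ∃ B : ℝ, 0 < B ∧ ∀ r ∈ Set.Ioo (0 : ℝ) 1,
      ((Nat.factorial (n - 1) : ℝ) / (Nat.factorial k * Nat.factorial (n - k)))
          * (((n : ℝ) - k) * (r ^ k)⁻¹ * (deriv W r) ^ k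
              + k * r * (r ^ k)⁻¹ * (deriv W r) ^ (k - 1) * deriv (deriv W) r)
        ≤ B * (W r) ^ q := by
  set p : ℝ := ((k : ℝ) + 1) / ((k : ℝ) - q) with hp_def
  have hk0 : (0 : ℝ) < (k : ℝ) := by exact_mod_cast hk1
  have hden : (k : ℝ) - q < 0 := by linarith
  have hp_neg : p < 0 := div_neg_of_pos_of_neg (by positivity) hden
  have hS : (0 : ℝ) < -2 * p := by linarith
  have hkey : p * ((k : ℝ) - q) = (k : ℝ) + 1 := div_mul_cancel₀ _ hden.ne
  have hexp : (p - 1) * (k : ℝ) - 1 = p * q := by nlinarith [hkey]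
  -- first derivative
  have hderiv : ∀ r : ℝ, r ∈ Set.Ioo (-1 : ℝ) 1 →
      HasDerivAt W ((-2 * p) * r * (1 - r ^ 2) ^ (p - 1)) r := by
    intro r hr
    have hu : 0 < 1 - r ^ 2 := by nlinarith [hr.1, hr.2]
    have h1 : HasDerivAt (fun r : ℝ => 1 - r ^ 2) (-(2 * r)) r := by
      simpa using ((hasDerivAt_pow 2 r).const_sub 1)
    have h2 : HasDerivAt (fun x : ℝ => x ^ p) (p * (1 - r ^ 2) ^ (p - 1)) (1 - r ^ 2) :=
      Real.hasDerivAt_rpow_const (Or.inl hu.ne')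
    have := h1.rpow_const (p := p) (Or.inl hu.ne')
    rw [hW]
    convert this using 1
    ring
  have hderivW : ∀ r : ℝ, r ∈ Set.Ioo (-1 : ℝ) 1 →
      deriv W r = (-2 * p) * r * (1 - r ^ 2) ^ (p - 1) := fun r hr => (hderiv r hr).deriv
  -- second derivative
  have hderiv2 : ∀ r : ℝ, r ∈ Set.Ioo (-1 : ℝ) 1 →
      deriv (deriv W) r
        = (-2 * p) * (1 - r ^ 2) ^ (p - 1)
          - 2 * (-2 * p) * (p - 1) * r ^ 2 * (1 - r ^ 2) ^ (p - 2) := by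
    intro r hr
    have hu : 0 < 1 - r ^ 2 := by nlinarith [hr.1, hr.2]
    have hEq : deriv W =ᶠ[𝓝 r] fun x => (-2 * p) * x * (1 - x ^ 2) ^ (p - 1) := by
      filter_upwards [isOpen_Ioo.mem_nhds hr] with x hx using hderivW x hx
    rw [hEq.deriv_eq]
    have h1 : HasDerivAt (fun x : ℝ => 1 - x ^ 2) (-(2 * r)) r := by
      simpa using ((hasDerivAt_pow 2 r).const_sub 1)
    have h2 : HasDerivAt (fun x : ℝ => (1 - x ^ 2) ^ (p - 1))
        ((p - 1) * (1 - r ^ 2) ^ (p - 1 - 1) * (-(2 * r))) r :=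
      (Real.hasDerivAt_rpow_const (Or.inl hu.ne')).comp (h₂ := fun x : ℝ => x ^ (p - 1)) r h1
    have h3 : HasDerivAt (fun x : ℝ => (-2 * p) * x) (-2 * p) r := by
      simpa using (hasDerivAt_id r).const_mul (-2 * p)
    have h4 := h3.mul h2
    rw [HasDerivAt.deriv (f := fun x => -2 * p * x * (1 - x ^ 2) ^ (p - 1)) h4]
    have : p - 1 - 1 = p - 2 := by ring
    rw [this]
    ring
  refine ⟨?_, ?_, ?_, ?_, ?_⟩
  · -- smoothness
    rw [hW]
    intro r hr
    have hu : (1 : ℝ) - r ^ 2 ≠ 0 := by nlinarith [hr.1, hr.2]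
    exact (((contDiffAt_const (c := (1:ℝ))).sub (contDiffAt_id.pow 2)).rpow_const_of_ne
      hu).contDiffWithinAt
  · -- W' ≥ 0
    intro r hr
    have hr' : r ∈ Set.Ioo (-1 : ℝ) 1 := ⟨by linarith [hr.1], hr.2⟩
    rw [hderivW r hr']
    have hu : 0 < 1 - r ^ 2 := by nlinarith [hr.1, hr.2]
    have := Real.rpow_pos_of_pos hu (p - 1)
    have hr0 := hr.1
    positivity
  · -- W'' > 0
    intro r hr
    have hr' : r ∈ Set.Ioo (-1 : ℝ) 1 := ⟨by linarith [hr.1], hr.2⟩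
    rw [hderiv2 r hr']
    have hu : 0 < 1 - r ^ 2 := by nlinarith [hr.1, hr.2]
    have h1 := Real.rpow_pos_of_pos hu (p - 1)
    have h2 := Real.rpow_pos_of_pos hu (p - 2)
    nlinarith [mul_pos hS h1,
      mul_nonneg (mul_nonneg hS.le (by linarith : (0:ℝ) ≤ 1 - p))
        (mul_nonneg (sq_nonneg r) h2.le)]
  · -- blow up at boundary
    have h1 : Tendsto (fun r : ℝ => 1 - r ^ 2) (𝓝[<] (1 : ℝ)) (𝓝[>] 0) := by
      rw [tendsto_nhdsWithin_iff]
      constructor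
      · have : Tendsto (fun r : ℝ => 1 - r ^ 2) (𝓝 (1 : ℝ)) (𝓝 (1 - 1 ^ 2)) := by
          exact (continuous_const.sub (continuous_pow 2)).tendsto 1
        simpa using this.mono_left nhdsWithin_le_nhds
      · filter_upwards [Ioo_mem_nhdsLT_of_mem
            (by norm_num : (1:ℝ) ∈ Set.Ioc (0:ℝ) 1)] with x hx
        have : 0 < 1 - x ^ 2 := by nlinarith [hx.1, hx.2]
        simpa using this
    have h2 : Tendsto (fun u : ℝ => u ^ p) (𝓝[>] (0 : ℝ)) atTop := by
      have h3 : Tendsto (fun u : ℝ => (u⁻¹) ^ (-p)) (𝓝[>] (0 : ℝ)) atTop :=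
        (tendsto_rpow_atTop (by linarith)).comp tendsto_inv_nhdsGT_zero
      refine h3.congr' ?_
      filter_upwards [self_mem_nhdsWithin] with u hu
      simp [Real.inv_rpow (le_of_lt hu), Real.rpow_neg (le_of_lt hu)]
    rw [hW]
    exact h2.comp h1
  · -- the main inequality
    set A : ℝ := ((Nat.factorial (n - 1) : ℝ) / (Nat.factorial k * Nat.factorial (n - k)))
      with hA_def
    have hA : 0 < A := by
      apply div_pos
      · exact_mod_cast Nat.factorial_pos _
      · positivity
    have hkn' : (k : ℝ) < (n : ℝ) := by
      have : k < n := lt_of_le_of_lt hkn (Nat.sub_lt (by omega) one_pos)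
      exact_mod_cast this
    refine ⟨A * (-2 * p) ^ k * (((n : ℝ) - k) + k * (3 - 2 * p)), ?_, ?_⟩
    · have h1 : (0:ℝ) < (-2 * p) ^ k := pow_pos hS k
      have h2 : (0:ℝ) < ((n : ℝ) - k) + k * (3 - 2 * p) := by nlinarith
      positivity
    intro r hr
    have hr' : r ∈ Set.Ioo (-1 : ℝ) 1 := ⟨by linarith [hr.1], hr.2⟩
    have hr0 : 0 < r := hr.1
    have hu : 0 < 1 - r ^ 2 := by nlinarith [hr.1, hr.2]
    have hu1 : 1 - r ^ 2 ≤ 1 := by nlinarith [hr.1]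
    set u : ℝ := 1 - r ^ 2 with hu_def
    -- powers of u
    have hupq : (0:ℝ) < u ^ (p * q) := Real.rpow_pos_of_pos hu _
    have hWq : (W r) ^ q = u ^ (p * q) := by
      rw [hW]
      exact (Real.rpow_mul hu.le p q).symm
    rw [hderivW r hr', hderiv2 r hr', hWq]
    -- rewrite derivative powers
    have hpow : ∀ m : ℕ, ((-2 * p) * r * u ^ (p - 1)) ^ m
        = (-2 * p) ^ m * r ^ m * u ^ ((p - 1) * m) := by
      intro m
      rw [mul_pow, mul_pow, ← Real.rpow_natCast (u ^ (p-1)) m, ← Real.rpow_mul hu.le]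
    have hrk : (0:ℝ) < r ^ k := pow_pos hr0 k
    -- term 1 bound
    have hT1 : ((n : ℝ) - k) * (r ^ k)⁻¹ * ((-2 * p) * r * u ^ (p - 1)) ^ k
        ≤ ((n : ℝ) - k) * (-2 * p) ^ k * u ^ (p * q) := by
      rw [hpow k]
      have hsplit : u ^ ((p - 1) * (k : ℝ)) = u ^ (p * q) * u := by
        rw [show (p - 1) * (k:ℝ) = p * q + 1 by linarith [hexp], Real.rpow_add hu,
          Real.rpow_one]
      have h1 : ((n : ℝ) - k) * (r ^ k)⁻¹ * ((-2 * p) ^ k * r ^ k * u ^ ((p - 1) * (k:ℝ)))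
          = ((n : ℝ) - k) * (-2 * p) ^ k * (u ^ (p * q) * u) := by
        rw [hsplit]; field_simp
      rw [h1]
      have hc : 0 ≤ ((n : ℝ) - k) * (-2 * p) ^ k :=
        mul_nonneg (by linarith) (le_of_lt (pow_pos hS k))
      have hmul : u ^ (p * q) * u ≤ u ^ (p * q) := mul_le_of_le_one_right hupq.le hu1
      exact mul_le_mul_of_nonneg_left hmul hc
    -- second derivative bound
    have hdd : (-2 * p) * u ^ (p - 1) - 2 * (-2 * p) * (p - 1) * r ^ 2 * u ^ (p - 2)
        ≤ (-2 * p) * (3 - 2 * p) * u ^ (p - 2) := by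
      have hsplit : u ^ (p - 1) = u ^ (p - 2) * u := by
        rw [show p - 1 = (p - 2) + 1 by ring, Real.rpow_add hu, Real.rpow_one]
      rw [hsplit]
      have h2 := Real.rpow_pos_of_pos hu (p - 2)
      have hr2 : r ^ 2 ≤ 1 := by nlinarith [hr.1, hr.2]
      nlinarith [mul_nonneg (mul_pos hS h2).le (by linarith : (0:ℝ) ≤ 1 - u),
        mul_nonneg (mul_nonneg (mul_nonneg hS.le (by linarith : (0:ℝ) ≤ 1 - p)) h2.le)
          (by linarith : (0:ℝ) ≤ 1 - r ^ 2)]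
    have hdd_pos : 0 < (-2 * p) * u ^ (p - 1)
        - 2 * (-2 * p) * (p - 1) * r ^ 2 * u ^ (p - 2) := by
      have h1 := Real.rpow_pos_of_pos hu (p - 1)
      have h2 := Real.rpow_pos_of_pos hu (p - 2)
      nlinarith [mul_pos hS h1, mul_pos (mul_pos hS h2) (mul_pos hr0 hr0)]
    -- term 2 bound
    have hT2 : (k : ℝ) * r * (r ^ k)⁻¹ * ((-2 * p) * r * u ^ (p - 1)) ^ (k - 1)
          * ((-2 * p) * u ^ (p - 1) - 2 * (-2 * p) * (p - 1) * r ^ 2 * u ^ (p - 2))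
        ≤ (k : ℝ) * (3 - 2 * p) * (-2 * p) ^ k * u ^ (p * q) := by
      rw [hpow (k - 1)]
      have hrr : r * (r ^ k)⁻¹ * r ^ (k - 1) = 1 := by
        rw [show r * (r ^ k)⁻¹ * r ^ (k-1) = (r * r ^ (k-1)) * (r ^ k)⁻¹ by ring,
          ← pow_succ' r (k-1), Nat.sub_add_cancel hk1]
        exact mul_inv_cancel₀ hrk.ne'
      have hcoef : 0 ≤ (k:ℝ) * ((-2 * p) ^ (k-1) * u ^ ((p - 1) * ((k:ℕ) - 1 : ℕ))) := by
        have := Real.rpow_pos_of_pos hu ((p - 1) * ((k:ℕ) - 1 : ℕ))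
        have := pow_pos hS (k - 1)
        positivity
      calc (k : ℝ) * r * (r ^ k)⁻¹ * ((-2 * p) ^ (k-1) * r ^ (k-1) * u ^ ((p - 1) * ((k:ℕ) - 1 : ℕ)))
            * ((-2 * p) * u ^ (p - 1) - 2 * (-2 * p) * (p - 1) * r ^ 2 * u ^ (p - 2))
          = (k:ℝ) * ((-2 * p) ^ (k-1) * u ^ ((p - 1) * ((k:ℕ) - 1 : ℕ)))
            * ((-2 * p) * u ^ (p - 1) - 2 * (-2 * p) * (p - 1) * r ^ 2 * u ^ (p - 2)) := by
            rw [show (k : ℝ) * r * (r ^ k)⁻¹ * ((-2 * p) ^ (k-1) * r ^ (k-1) * u ^ ((p - 1) * ((k:ℕ) - 1 : ℕ)))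
              = (r * (r ^ k)⁻¹ * r ^ (k-1)) * ((k:ℝ) * ((-2 * p) ^ (k-1) * u ^ ((p - 1) * ((k:ℕ) - 1 : ℕ)))) by ring,
              hrr, one_mul]
        _ ≤ (k:ℝ) * ((-2 * p) ^ (k-1) * u ^ ((p - 1) * ((k:ℕ) - 1 : ℕ)))
            * ((-2 * p) * (3 - 2 * p) * u ^ (p - 2)) :=
            mul_le_mul_of_nonneg_left hdd hcoef
        _ = (k : ℝ) * (3 - 2 * p) * ((-2 * p) ^ (k-1) * (-2*p))
            * (u ^ ((p - 1) * ((k:ℕ) - 1 : ℕ)) * u ^ (p - 2)) := by ring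
        _ = (k : ℝ) * (3 - 2 * p) * (-2 * p) ^ k * u ^ (p * q) := by
            rw [← pow_succ, Nat.sub_add_cancel hk1, ← Real.rpow_add hu]
            congr 1
            congr 1
            have hcast : (((k:ℕ) - 1 : ℕ) : ℝ) = (k : ℝ) - 1 := by
              have : (1:ℕ) ≤ k := hk1
              push_cast [Nat.cast_sub this]
              ring
            rw [hcast]
            nlinarith [hexp]
    calc A * (((n : ℝ) - k) * (r ^ k)⁻¹ * ((-2 * p) * r * u ^ (p - 1)) ^ k
          + (k:ℝ) * r * (r ^ k)⁻¹ * ((-2 * p) * r * u ^ (p - 1)) ^ (k - 1)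
            * ((-2 * p) * u ^ (p - 1) - 2 * (-2 * p) * (p - 1) * r ^ 2 * u ^ (p - 2)))
        ≤ A * (((n : ℝ) - k) * (-2 * p) ^ k * u ^ (p * q)
            + (k : ℝ) * (3 - 2 * p) * (-2 * p) ^ k * u ^ (p * q)) := by
          exact mul_le_mul_of_nonneg_left (add_le_add hT1 hT2) hA.le
      _ = A * (-2 * p) ^ k * (((n : ℝ) - k) + k * (3 - 2 * p)) * u ^ (p * q) := by ring
end

section
/- Let α > 1, k ≥ 1 an integer, a > 0, and n > k. Define ū(x) = a·φ(|x|/a) on B_a(0), where φ(r) = ∫₀^r [((1-t^(k+1))^(-β) - 1)/t]^(1/k) dt with β = 1/(α-1). Then ū ∈ C²(B_a(0)) is strictly convex, ∂ū/∂ν → +∞ at ∂B_a(0) (ν the outer normal), and S_k(D²ū)(x) ≤ [(k+1)(n-1)!/(a^k (α-1) k! (n-k-1)!)]·(1 + |Dū(x)|^k)^α for all x ∈ B_a(0). -/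
/-!
Put `X = φ'^k = ((1 - r^{k+1})^{-β} - 1)/r`, so that `1 + rX = (1 - r^{k+1})^{-β}`.
Differentiating, `X + rX' = (k+1) β r^k (1 - r^{k+1})^{-β-1} = (k+1) β r^k (1 + rX)^α`,
because `αβ = β + 1`. Bernoulli's inequality shows `X` is smaller than this, so `X' > 0`
and hence `φ'' > 0`. Since `k r φ'^{k-1} φ'' = rX' ≥ 0` and `n - k ≥ 1`, the bracket of
`S_k` is at most `(n-k)(X + rX')`; the factor `r^k` cancels, `1 + rX ≤ 1 + X`, and
`(n-k)! = (n-k) (n-k-1)!` turns the constant into the stated one.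
-/

open Real Set Filter Topology

-- Tangent-line inequality for the convex function `t ↦ (1 - t)^{-β}` at `s`.
theorem one_sub_rpow_neg_sub_one_le {β s : ℝ} (hβ : 0 < β) (hs : s < 1) :
    (1 - s) ^ (-β) - 1 ≤ β * s * (1 - s) ^ (-β - 1) := by
  have hu : 0 < 1 - s := by linarith
  have hbern : 1 - (β + 1) * s ≤ (1 - s) ^ (β + 1) := by
    have := one_add_mul_self_le_rpow_one_add (by linarith : (-1 : ℝ) ≤ -s)
      (by linarith : (1 : ℝ) ≤ β + 1)
    rw [← sub_eq_add_neg] at this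
    linarith
  have hsplit : (1 - s) ^ (-β) = (1 - s) * (1 - s) ^ (-β - 1) := by
    conv_lhs => rw [show -β = 1 + (-β - 1) by ring, rpow_add hu, rpow_one]
  have hcancel : (1 - s) ^ (β + 1) * (1 - s) ^ (-β - 1) = 1 := by
    rw [← rpow_add hu]; norm_num
  linarith [mul_le_mul_of_nonneg_right hbern (rpow_pos_of_pos hu (-β - 1)).le]

-- `gradPow k β r = φ'(r)^k` for the radial profile `φ` of the barrier.
noncomputable def gradPow (k : ℕ) (β r : ℝ) : ℝ := ((1 - r ^ (k + 1)) ^ (-β) - 1) / r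

section gradPow

variable {k : ℕ} {β r : ℝ}

theorem one_add_mul_gradPow (hr : r ≠ 0) :
    1 + r * gradPow k β r = (1 - r ^ (k + 1)) ^ (-β) := by
  rw [gradPow]; field_simp; ring

theorem hasDerivAt_gradPow (hr : r ≠ 0) (hu : 1 - r ^ (k + 1) ≠ 0) :
    HasDerivAt (gradPow k β)
      (((k + 1) * β * r ^ k * (1 - r ^ (k + 1)) ^ (-β - 1) - gradPow k β r) / r) r := by
  have hg : HasDerivAt (fun r : ℝ => (1 - r ^ (k + 1)) ^ (-β))
      ((k + 1) * β * r ^ k * (1 - r ^ (k + 1)) ^ (-β - 1)) r := by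
    convert ((hasDerivAt_pow (k + 1) r).const_sub 1).rpow_const (p := -β) (Or.inl hu) using 1
    push_cast; ring
  refine ((hg.sub_const 1).div (hasDerivAt_id' r) hr).congr_deriv ?_
  rw [gradPow]; field_simp

theorem gradPow_add_mul_deriv (hr : r ≠ 0) (hu : 1 - r ^ (k + 1) ≠ 0) :
    gradPow k β r + r * deriv (gradPow k β) r
      = (k + 1) * β * r ^ k * (1 - r ^ (k + 1)) ^ (-β - 1) := by
  rw [(hasDerivAt_gradPow hr hu).deriv]; field_simp; ring

theorem one_sub_pow_succ_pos (hr : r ∈ Ioo 0 1) : 0 < 1 - r ^ (k + 1) :=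
  sub_pos.2 (pow_lt_one₀ hr.1.le hr.2 k.succ_ne_zero)

theorem gradPow_pos (hβ : 0 < β) (hr : r ∈ Ioo 0 1) : 0 < gradPow k β r := by
  have hg : 1 < (1 - r ^ (k + 1)) ^ (-β) := one_lt_rpow_of_pos_of_lt_one_of_neg
    (one_sub_pow_succ_pos hr) (sub_lt_self 1 (pow_pos hr.1 (k + 1))) (neg_lt_zero.2 hβ)
  exact div_pos (sub_pos.2 hg) hr.1

theorem gradPow_lt (hk : k ≠ 0) (hβ : 0 < β) (hr : r ∈ Ioo 0 1) :
    gradPow k β r < (k + 1) * β * r ^ k * (1 - r ^ (k + 1)) ^ (-β - 1) := by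
  have hs : r ^ (k + 1) < 1 := pow_lt_one₀ hr.1.le hr.2 k.succ_ne_zero
  have hP : 0 < β * r ^ k * (1 - r ^ (k + 1)) ^ (-β - 1) :=
    mul_pos (mul_pos hβ (pow_pos hr.1 k)) (rpow_pos_of_pos (sub_pos.2 hs) _)
  have hrX : r * gradPow k β r ≤ r * (β * r ^ k * (1 - r ^ (k + 1)) ^ (-β - 1)) := by
    have := one_sub_rpow_neg_sub_one_le hβ hs
    rw [← one_add_mul_gradPow hr.1.ne'] at this
    linear_combination this
  have hk1 : (1 : ℝ) < k + 1 := by norm_cast; omega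
  calc gradPow k β r ≤ β * r ^ k * (1 - r ^ (k + 1)) ^ (-β - 1) :=
        le_of_mul_le_mul_left hrX hr.1
    _ < (k + 1) * (β * r ^ k * (1 - r ^ (k + 1)) ^ (-β - 1)) := lt_mul_left hP hk1
    _ = _ := by ring

theorem deriv_gradPow_pos (hk : k ≠ 0) (hβ : 0 < β) (hr : r ∈ Ioo 0 1) :
    0 < deriv (gradPow k β) r := by
  have hu : 1 - r ^ (k + 1) ≠ 0 := (one_sub_pow_succ_pos hr).ne'
  rw [(hasDerivAt_gradPow hr.1.ne' hu).deriv]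
  exact div_pos (sub_pos.2 (gradPow_lt hk hβ hr)) hr.1

theorem tendsto_gradPow_atTop (hβ : 0 < β) : Tendsto (gradPow k β) (𝓝[<] 1) atTop := by
  have hu : Tendsto (fun r : ℝ => 1 - r ^ (k + 1)) (𝓝[<] 1) (𝓝[>] 0) := by
    refine tendsto_nhdsWithin_iff.2 ⟨?_, ?_⟩
    · exact tendsto_nhdsWithin_of_tendsto_nhds
        ((by fun_prop : Continuous fun r : ℝ => 1 - r ^ (k + 1)).tendsto' 1 0 (by simp))
    · filter_upwards [Ioo_mem_nhdsLT (zero_lt_one' ℝ)] with r hr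
      exact one_sub_pow_succ_pos hr
  have hg := (tendsto_rpow_neg_nhdsGT_zero (neg_lt_zero.2 hβ)).comp hu
  have hr : Tendsto (fun r : ℝ => r⁻¹) (𝓝[<] 1) (𝓝 1) :=
    tendsto_nhdsWithin_of_tendsto_nhds
      (by simpa using (continuousAt_inv₀ (one_ne_zero' ℝ)).tendsto)
  refine ((tendsto_atTop_add_const_right _ (-1) hg).atTop_mul_pos one_pos hr).congr fun r => ?_
  simp [gradPow, div_eq_mul_inv, sub_eq_add_neg]

end gradPow

theorem HasDerivAt.rpow_one_div_natCast {f : ℝ → ℝ} {f' x : ℝ} {k : ℕ}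
    (hf : HasDerivAt f f' x) (hx : 0 < f x) (hk : k ≠ 0) :
    HasDerivAt (fun y => f y ^ ((1 : ℝ) / k))
      (f' / (k * (f x ^ ((1 : ℝ) / k)) ^ (k - 1))) x := by
  have hcancel : (f x ^ ((1 : ℝ) / k)) ^ (k - 1) * f x ^ ((1 : ℝ) / k - 1) = 1 := by
    rw [← rpow_natCast, ← rpow_mul hx.le, ← rpow_add hx,
      Nat.cast_sub (Nat.one_le_iff_ne_zero.2 hk)]
    field_simp
    simp
  refine (hf.rpow_const (Or.inl hx.ne')).congr_deriv ?_
  have : (0 : ℝ) < (f x ^ ((1 : ℝ) / k)) ^ (k - 1) := by positivity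
  generalize f x ^ ((1 : ℝ) / k - 1) = Q at hcancel ⊢
  field_simp
  linear_combination f' * hcancel

theorem rpow_neg_sub_one_le_one_add_gradPow_rpow {k : ℕ} {α β r : ℝ} (hα : 1 < α)
    (hβ : β = 1 / (α - 1)) (hr : r ∈ Ioo 0 1) :
    (1 - r ^ (k + 1)) ^ (-β - 1) ≤ (1 + gradPow k β r) ^ α := by
  have hu : 0 < 1 - r ^ (k + 1) := one_sub_pow_succ_pos hr
  have hexp : -β - 1 = -β * α := by
    rw [hβ]; field_simp [(sub_pos.2 hα).ne']; ring
  have hX := gradPow_pos (k := k) (hβ ▸ one_div_pos.2 (sub_pos.2 hα)) hr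
  rw [hexp, rpow_mul hu.le, ← one_add_mul_gradPow hr.1.ne']
  exact rpow_le_rpow (add_pos one_pos (mul_pos hr.1 hX)).le
    (add_le_add_right (mul_le_of_le_one_left hX.le hr.2.le) 1) (by linarith)

theorem barrier_sk_le {n k : ℕ} {α β a r : ℝ} (hk : k ≠ 0) (hkn : k < n) (hα : 1 < α)
    (hβ : β = 1 / (α - 1)) (ha : 0 < a) (hr : r ∈ Ioo 0 1) :
    ((n - 1).factorial / (k.factorial * (n - k).factorial) : ℝ) / a ^ k * (r ^ k)⁻¹
        * ((n - k) * gradPow k β r + r * deriv (gradPow k β) r)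
      ≤ (k + 1) * (n - 1).factorial / (a ^ k * (α - 1) * k.factorial * (n - k - 1).factorial)
        * (1 + gradPow k β r) ^ α := by
  have hβ0 : 0 < β := hβ ▸ one_div_pos.2 (sub_pos.2 hα)
  have hu : 1 - r ^ (k + 1) ≠ 0 := (one_sub_pow_succ_pos hr).ne'
  have hnk : (1 : ℝ) ≤ n - k := by
    rw [le_sub_iff_add_le']; exact_mod_cast Nat.succ_le_of_lt hkn
  have hsplit : ((n - k).factorial : ℝ) = (n - k) * (n - k - 1).factorial := by
    rw [← Nat.mul_factorial_pred (by omega : n - k ≠ 0), Nat.cast_mul, Nat.cast_sub hkn.le]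
  have hD := mul_pos hr.1 (deriv_gradPow_pos hk hβ0 hr)
  have hak := pow_pos ha k
  have hα1 : 0 < α - 1 := sub_pos.2 hα
  calc _ ≤ ((n - 1).factorial / (k.factorial * (n - k).factorial) : ℝ) / a ^ k * (r ^ k)⁻¹
        * ((n - k) * (gradPow k β r + r * deriv (gradPow k β) r)) := by
          refine mul_le_mul_of_nonneg_left (by nlinarith) (mul_nonneg ?_ ?_)
          · exact div_nonneg (by positivity) hak.le
          · exact (inv_pos.2 (pow_pos hr.1 k)).le
    _ = (k + 1) * (n - 1).factorial / (a ^ k * (α - 1) * k.factorial * (n - k - 1).factorial)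
        * (1 - r ^ (k + 1)) ^ (-β - 1) := by
          rw [gradPow_add_mul_deriv hr.1.ne' hu, hsplit, hβ]
          have : (0 : ℝ) < r := hr.1
          field_simp
    _ ≤ _ := by
          refine mul_le_mul_of_nonneg_left (rpow_neg_sub_one_le_one_add_gradPow_rpow hα hβ hr) ?_
          exact div_nonneg (by positivity)
            (mul_pos (mul_pos (mul_pos hak hα1) (by positivity)) (by positivity)).le

open Filter Topology in
theorem stmt_19_general (n k : ℕ) (α a : ℝ) (hk1 : 1 ≤ k) (hkn : k < n)
    (hα : 1 < α) (ha : 0 < a)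
    (β : ℝ) (hβ : β = 1 / (α - 1))
    (φd : ℝ → ℝ)
    (hφd : ∀ r, φd r = (((1 - r ^ (k + 1)) ^ (-β) - 1) / r) ^ ((1 : ℝ) / k)) :
    (∀ r ∈ Set.Ioo (0 : ℝ) 1, 0 < deriv φd r) ∧
    Tendsto φd (𝓝[<] 1) atTop ∧
    ∀ r ∈ Set.Ioo (0 : ℝ) 1,
      ((Nat.factorial (n - 1) : ℝ) / (Nat.factorial k * Nat.factorial (n - k))) / a ^ k
          * (r ^ k)⁻¹
          * (((n : ℝ) - k) * (φd r) ^ k + k * r * (φd r) ^ (k - 1) * deriv φd r)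
        ≤ ((k : ℝ) + 1) * Nat.factorial (n - 1)
            / (a ^ k * (α - 1) * Nat.factorial k * Nat.factorial (n - k - 1))
          * (1 + (φd r) ^ k) ^ α := by
  have hk : k ≠ 0 := Nat.one_le_iff_ne_zero.1 hk1
  have hβ0 : 0 < β := hβ ▸ one_div_pos.2 (sub_pos.2 hα)
  obtain rfl : φd = fun r => gradPow k β r ^ ((1 : ℝ) / k) := funext hφd
  have hderiv : ∀ r ∈ Ioo (0 : ℝ) 1, deriv (fun r => gradPow k β r ^ ((1 : ℝ) / k)) r
      = deriv (gradPow k β) r / (k * (gradPow k β r ^ ((1 : ℝ) / k)) ^ (k - 1)) := by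
    intro r hr
    have hX : DifferentiableAt ℝ (gradPow k β) r :=
      (hasDerivAt_gradPow hr.1.ne' (one_sub_pow_succ_pos hr).ne').differentiableAt
    exact (hX.hasDerivAt.rpow_one_div_natCast (gradPow_pos hβ0 hr) hk).deriv
  have hφ : ∀ r ∈ Ioo (0 : ℝ) 1, 0 < gradPow k β r ^ ((1 : ℝ) / k) := fun r hr =>
    rpow_pos_of_pos (gradPow_pos hβ0 hr) _
  refine ⟨fun r hr => ?_, (tendsto_rpow_atTop (by positivity)).comp (tendsto_gradPow_atTop hβ0),
    fun r hr => ?_⟩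
  · rw [hderiv r hr]
    have := hφ r hr
    exact div_pos (deriv_gradPow_pos hk hβ0 hr) (by positivity)
  · have := hφ r hr
    have hφk : (gradPow k β r ^ ((1 : ℝ) / k)) ^ k = gradPow k β r := by
      rw [one_div, rpow_inv_natCast_pow (gradPow_pos hβ0 hr).le hk]
    have hchain : k * r * (gradPow k β r ^ ((1 : ℝ) / k)) ^ (k - 1) * (deriv (gradPow k β) r
        / (k * (gradPow k β r ^ ((1 : ℝ) / k)) ^ (k - 1))) = r * deriv (gradPow k β) r := by
      field_simp
    simp only [hderiv r hr, hφk, hchain]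
    exact barrier_sk_le hk hkn hα hβ ha hr

open Filter Topology in
/-- The barrier `ū(x) = a φ(|x|/a)` of Lemma 3.8, written through the radial profile:
with `φ'(r) = [((1-r^{k+1})^{-β}-1)/r]^{1/k}`, `β = 1/(α-1)`, one has `φ'' > 0` (strict
convexity), `∂ū/∂ν = +∞` on `∂B_a(0)` (i.e. `φ'(r) → ∞` as `r → 1⁻`), and
`S_k(D²ū)(x) = (A_k/a^k) r^{-k}[(n-k)(φ')^k + k r (φ')^{k-1} φ''] (r = |x|/a)` satisfies
`S_k(D²ū) ≤ (k+1)(n-1)!/(a^k (α-1) k! (n-k-1)!) · (1+|Dū|^k)^α`, where `|Dū(x)| = φ'(r)`. -/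
theorem stmt_19 (n k : ℕ) (α a : ℝ) (hn : 2 ≤ n) (hk1 : 1 ≤ k) (hkn : k < n)
    (hα : 1 < α) (ha : 0 < a)
    (β : ℝ) (hβ : β = 1 / (α - 1))
    (φd : ℝ → ℝ)
    (hφd : ∀ r, φd r = (((1 - r ^ (k + 1)) ^ (-β) - 1) / r) ^ ((1 : ℝ) / k)) :
    (∀ r ∈ Set.Ioo (0 : ℝ) 1, 0 < deriv φd r) ∧
    Tendsto φd (𝓝[<] 1) atTop ∧
    ∀ r ∈ Set.Ioo (0 : ℝ) 1,
      ((Nat.factorial (n - 1) : ℝ) / (Nat.factorial k * Nat.factorial (n - k))) / a ^ k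
          * (r ^ k)⁻¹
          * (((n : ℝ) - k) * (φd r) ^ k + k * r * (φd r) ^ (k - 1) * deriv φd r)
        ≤ ((k : ℝ) + 1) * Nat.factorial (n - 1)
            / (a ^ k * (α - 1) * Nat.factorial k * Nat.factorial (n - k - 1))
          * (1 + (φd r) ^ k) ^ α :=
  stmt_19_general n k α a hk1 hkn hα ha β hβ φd hφd
end
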